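/- Let X, Z ∈ M_{n×p} be matrices of the same dimensions. If XZ* = 0 and X*Z = 0, then ‖X + Z‖_* = ‖X‖_* + ‖Z‖_*. -/

import Mathlib

open Matrix
open scoped ComplexOrder

namespace IRLSM

/-- Frobenius inner product `⟨X,Y⟩ = Tr(X Yᴴ)`. -/
noncomputable def frobInner {n p : ℕ} (X Y : Matrix (Fin n) (Fin p) ℂ) : ℂ :=
  Matrix.trace (X * Yᴴ)

/-- Frobenius norm. -/
noncomputable def frobNorm {n p : ℕ} (X : Matrix (Fin n) (Fin p) ℂ) : ℝ :=
  Real.sqrt (∑ i, ∑ j, Complex.normSq (X i j))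

/-- Singular values of `X` in nonincreasing order, `sv X 0 = σ₁ ≥ sv X 1 = σ₂ ≥ …`;
indices `≥ n` give `0`. -/
noncomputable def sv {n p : ℕ} (X : Matrix (Fin n) (Fin p) ℂ) : ℕ → ℝ :=
  fun i => ((List.ofFn fun j : Fin n =>
      Real.sqrt ((Matrix.isHermitian_mul_conjTranspose_self X).eigenvalues j)).mergeSort
      (fun a b => decide (b ≤ a))).getD i 0

/-- Nuclear norm `‖X‖_* = ∑ σᵢ(X)`. -/
noncomputable def nuclearNorm {n p : ℕ} (X : Matrix (Fin n) (Fin p) ℂ) : ℝ :=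
  ∑ i : Fin n, sv X (i : ℕ)

/-- Positive square root of a positive semidefinite matrix (junk value `0` otherwise). -/
noncomputable def matSqrt {n : ℕ} (W : Matrix (Fin n) (Fin n) ℂ) : Matrix (Fin n) (Fin n) ℂ :=
  @dite _ W.PosSemidef (Classical.dec _) (fun h => (h.1.eigenvectorUnitary : Matrix (Fin n) (Fin n) ℂ) *
    Matrix.diagonal (fun i => (RCLike.ofReal (Real.sqrt (h.1.eigenvalues i)) : ℂ)) *
    (star h.1.eigenvectorUnitary : Matrix (Fin n) (Fin n) ℂ)) (fun _ => 0)

/-- The functional `𝒥(X,W) = ½(‖W^{1/2}X‖_F² + ‖W^{-1/2}‖_F²)`. -/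
noncomputable def Jfun {n p : ℕ} (X : Matrix (Fin n) (Fin p) ℂ)
    (W : Matrix (Fin n) (Fin n) ℂ) : ℝ :=
  (frobNorm (matSqrt W * X) ^ 2 + frobNorm (matSqrt W⁻¹) ^ 2) / 2

/-- The restricted isometry constant `δ_k(𝒮)`: the smallest `δ ≥ 0` such that
`(1-δ)‖X‖_F² ≤ ‖𝒮(X)‖² ≤ (1+δ)‖X‖_F²` for all `X` of rank at most `k`. -/
noncomputable def ripConst {n p m : ℕ}
    (S : Matrix (Fin n) (Fin p) ℂ →ₗ[ℂ] (Fin m → ℂ)) (k : ℕ) : ℝ :=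
  sInf {δ : ℝ | 0 ≤ δ ∧ ∀ X : Matrix (Fin n) (Fin p) ℂ, X.rank ≤ k →
    (1 - δ) * frobNorm X ^ 2 ≤ ∑ i, Complex.normSq (S X i) ∧
      ∑ i, Complex.normSq (S X i) ≤ (1 + δ) * frobNorm X ^ 2}

/-- The rank null space property of order `k`. -/
def RNSP {n p m : ℕ} (S : Matrix (Fin n) (Fin p) ℂ →ₗ[ℂ] (Fin m → ℂ)) (k : ℕ) : Prop :=
  ∀ H : Matrix (Fin n) (Fin p) ℂ, S H = 0 → H ≠ 0 →
    ∀ H₁ H₂ : Matrix (Fin n) (Fin p) ℂ, H = H₁ + H₂ → H₁.rank ≤ k →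
      nuclearNorm H₁ < nuclearNorm H₂

/-- The strong rank null space property of order `k` with constant `η`. -/
def SRNSP {n p m : ℕ} (S : Matrix (Fin n) (Fin p) ℂ →ₗ[ℂ] (Fin m → ℂ)) (k : ℕ) (η : ℝ) : Prop :=
  ∀ X : Matrix (Fin n) (Fin p) ℂ, S X = 0 → X ≠ 0 →
    ∀ X₁ X₂ : Matrix (Fin n) (Fin p) ℂ, X = X₁ + X₂ → X₁.rank ≤ k →
      ∃ H₁ H₂ : Matrix (Fin n) (Fin p) ℂ, X = H₁ + H₂ ∧ H₁.rank ≤ 2 * k ∧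
        frobInner H₁ H₂ = 0 ∧ X₁ * H₂ᴴ = 0 ∧ X₁ᴴ * H₂ = 0 ∧
        nuclearNorm H₁ ≤ η * nuclearNorm H₂

/-- Best `k`-rank approximation error in the nuclear norm, `ρ_k(X)_*`. -/
noncomputable def rhoNuc {n p : ℕ} (k : ℕ) (X : Matrix (Fin n) (Fin p) ℂ) : ℝ :=
  sInf ((fun Z => nuclearNorm (X - Z)) '' {Z : Matrix (Fin n) (Fin p) ℂ | Z.rank ≤ k})

/-- `j^ε(u) = |u|` for `|u| ≥ ε` and `(u² + ε²)/(2ε)` otherwise. -/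
noncomputable def jeps (ε u : ℝ) : ℝ :=
  if ε ≤ |u| then |u| else (u ^ 2 + ε ^ 2) / (2 * ε)

/-- The functional `𝒥_ε(X) = ∑ᵢ j^ε(σᵢ(X))`. -/
noncomputable def Jeps {n p : ℕ} (ε : ℝ) (X : Matrix (Fin n) (Fin p) ℂ) : ℝ :=
  ∑ i : Fin n, jeps ε (sv X (i : ℕ))

/-- `(X^ℓ, W^ℓ, ε_ℓ)_ℓ` is an output of the IRLS-M algorithm with measurement map `S`,
data `M`, parameters `γ > 0` and `K`.  Here `X (ℓ+1)` is the weighted least squares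
minimizer for the weight `W ℓ`, `ε (ℓ+1) = min (ε ℓ) (γ σ_{K+1}(X^{ℓ+1}))`, and
`W (ℓ+1)` is built from an eigendecomposition of `X^{ℓ+1}(X^{ℓ+1})ᴴ` together with the
`ε`-stabilization of the singular values.  If `ε` reaches `0` the algorithm stops. -/
structure IsIRLSM {n p m : ℕ} (S : Matrix (Fin n) (Fin p) ℂ →ₗ[ℂ] (Fin m → ℂ))
    (M : Fin m → ℂ) (γ : ℝ) (K : ℕ)
    (X : ℕ → Matrix (Fin n) (Fin p) ℂ)
    (W : ℕ → Matrix (Fin n) (Fin n) ℂ)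
    (ε : ℕ → ℝ) : Prop where
  w_init : W 0 = 1
  eps_init : ε 0 = 1
  x_feasible : ∀ ℓ : ℕ, ε ℓ ≠ 0 → S (X (ℓ + 1)) = M
  x_min : ∀ ℓ : ℕ, ε ℓ ≠ 0 → ∀ Y : Matrix (Fin n) (Fin p) ℂ, S Y = M →
    frobNorm (matSqrt (W ℓ) * X (ℓ + 1)) ^ 2 ≤ frobNorm (matSqrt (W ℓ) * Y) ^ 2
  eps_update : ∀ ℓ : ℕ, ε ℓ ≠ 0 → ε (ℓ + 1) = min (ε ℓ) (γ * sv (X (ℓ + 1)) K)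
  w_update : ∀ ℓ : ℕ, ε ℓ ≠ 0 → ε (ℓ + 1) ≠ 0 →
    ∃ U : Matrix (Fin n) (Fin n) ℂ, U * Uᴴ = 1 ∧ Uᴴ * U = 1 ∧
      X (ℓ + 1) * (X (ℓ + 1))ᴴ =
        U * Matrix.diagonal (fun i : Fin n => ((sv (X (ℓ + 1)) (i : ℕ) : ℂ)) ^ 2) * Uᴴ ∧
      W (ℓ + 1) =
        U * Matrix.diagonal
            (fun i : Fin n => (((max (sv (X (ℓ + 1)) (i : ℕ)) (ε (ℓ + 1)) : ℝ) : ℂ))⁻¹) * Uᴴ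
  w_stop : ∀ ℓ : ℕ, ε ℓ ≠ 0 → ε (ℓ + 1) = 0 → W (ℓ + 1) = W ℓ
  stopped : ∀ ℓ : ℕ, ε ℓ = 0 → X (ℓ + 1) = X ℓ ∧ W (ℓ + 1) = W ℓ ∧ ε (ℓ + 1) = 0

end IRLSM

/-!
Since `X Zᴴ = 0`, `(X + Z)(X + Z)ᴴ = X Xᴴ + Z Zᴴ`, and since `Xᴴ Z = 0` the two positive
semidefinite summands annihilate each other. For such a pair the square roots also annihilate
each other, so `√(A + B) = √A + √B`, and the nuclear norm `‖X‖_* = tr √(X Xᴴ)` is additive.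
-/

open scoped MatrixOrder

namespace Matrix

variable {𝕜 m p : Type*} [RCLike 𝕜] [Fintype m] [DecidableEq m]

lemma isHermitian_cfcSqrt (A : Matrix m m 𝕜) : (CFC.sqrt A).IsHermitian :=
  (CFC.sqrt_nonneg A).isSelfAdjoint

lemma cfcSqrt_conjTranspose_mul_self {A : Matrix m m 𝕜} (hA : 0 ≤ A) :
    (CFC.sqrt A)ᴴ * CFC.sqrt A = A := by
  rw [(isHermitian_cfcSqrt A).eq, CFC.sqrt_mul_sqrt_self A hA]

lemma cfcSqrt_mul_eq_zero {A : Matrix m m 𝕜} {B : Matrix m p 𝕜} (hA : 0 ≤ A)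
    (h : A * B = 0) : CFC.sqrt A * B = 0 := by
  rwa [← cfcSqrt_conjTranspose_mul_self hA, conjTranspose_mul_self_mul_eq_zero] at h

lemma mul_cfcSqrt_eq_zero {A : Matrix m m 𝕜} {B : Matrix p m 𝕜} (hA : 0 ≤ A)
    (h : B * A = 0) : B * CFC.sqrt A = 0 := by
  rwa [← cfcSqrt_conjTranspose_mul_self hA, mul_conjTranspose_mul_self_eq_zero,
    (isHermitian_cfcSqrt A).eq] at h

lemma cfcSqrt_add_of_mul_eq_zero {A B : Matrix m m 𝕜} (hA : 0 ≤ A) (hB : 0 ≤ B)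
    (h : A * B = 0) : CFC.sqrt (A + B) = CFC.sqrt A + CFC.sqrt B := by
  have h' : B * A = 0 := by
    simpa [hA.isSelfAdjoint.star_eq, hB.isSelfAdjoint.star_eq] using congrArg star h
  have hAB : CFC.sqrt A * CFC.sqrt B = 0 := mul_cfcSqrt_eq_zero hB (cfcSqrt_mul_eq_zero hA h)
  have hBA : CFC.sqrt B * CFC.sqrt A = 0 := mul_cfcSqrt_eq_zero hA (cfcSqrt_mul_eq_zero hB h')
  refine CFC.sqrt_unique ?_ (add_nonneg (CFC.sqrt_nonneg A) (CFC.sqrt_nonneg B))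
  rw [add_mul, mul_add, mul_add, hAB, hBA, CFC.sqrt_mul_sqrt_self A hA,
    CFC.sqrt_mul_sqrt_self B hB, add_zero, zero_add]

lemma trace_cfcSqrt {A : Matrix m m 𝕜} (hA : A.PosSemidef) :
    trace (CFC.sqrt A) = ((∑ i, √(hA.1.eigenvalues i) : ℝ) : 𝕜) := by
  rw [CFC.sqrt_eq_real_sqrt A hA.nonneg, cfcₙ_eq_cfc, hA.1.cfc_eq, IsHermitian.cfc,
    Unitary.conjStarAlgAut_apply, trace_mul_cycle, Unitary.coe_star_mul_self, one_mul,
    trace_diagonal]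
  simp

end Matrix

lemma Fin.sum_univ_getD_zero {M : Type*} [AddCommMonoid M] {l : List M} {n : ℕ}
    (h : l.length = n) : ∑ i : Fin n, l.getD i 0 = l.sum := by
  subst h
  simp_rw [List.getD_eq_getElem _ _ (Fin.is_lt _)]
  exact Fin.sum_univ_getElem l

namespace IRLSM

lemma nuclearNorm_eq_sum_sqrt_eigenvalues {n p : ℕ} (X : Matrix (Fin n) (Fin p) ℂ) :
    nuclearNorm X = ∑ j, √((isHermitian_mul_conjTranspose_self X).eigenvalues j) := by
  unfold nuclearNorm sv
  rw [Fin.sum_univ_getD_zero (by simp), (List.mergeSort_perm _ _).sum_eq, List.sum_ofFn]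

lemma nuclearNorm_eq_trace_cfcSqrt {n p : ℕ} (X : Matrix (Fin n) (Fin p) ℂ) :
    (nuclearNorm X : ℂ) = trace (CFC.sqrt (X * Xᴴ)) := by
  rw [trace_cfcSqrt (posSemidef_self_mul_conjTranspose X), nuclearNorm_eq_sum_sqrt_eigenvalues]
  rfl

theorem statement14_general {n p : ℕ}
    (X Z : Matrix (Fin n) (Fin p) ℂ) (h1 : X * Zᴴ = 0) (h2 : Xᴴ * Z = 0) :
    nuclearNorm (X + Z) = nuclearNorm X + nuclearNorm Z := by
  have hsum : (X + Z) * (X + Z)ᴴ = X * Xᴴ + Z * Zᴴ := by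
    have h1' : Z * Xᴴ = 0 := by simpa using congrArg conjTranspose h1
    simp [Matrix.mul_add, Matrix.add_mul, h1, h1']
  have horth : X * Xᴴ * (Z * Zᴴ) = 0 := by
    rw [Matrix.mul_assoc, ← Matrix.mul_assoc Xᴴ, h2, Matrix.zero_mul, Matrix.mul_zero]
  have hX := (posSemidef_self_mul_conjTranspose X).nonneg
  have hZ := (posSemidef_self_mul_conjTranspose Z).nonneg
  have key : (nuclearNorm (X + Z) : ℂ) = nuclearNorm X + nuclearNorm Z := by
    rw [nuclearNorm_eq_trace_cfcSqrt, nuclearNorm_eq_trace_cfcSqrt, nuclearNorm_eq_trace_cfcSqrt,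
      hsum, cfcSqrt_add_of_mul_eq_zero hX hZ horth, trace_add]
  exact_mod_cast key

/-- if `XZ* = 0` and `X*Z = 0` then `‖X + Z‖_* = ‖X‖_* + ‖Z‖_*`. -/
theorem statement14 {n p : ℕ} (hnp : n ≤ p)
    (X Z : Matrix (Fin n) (Fin p) ℂ) (h1 : X * Zᴴ = 0) (h2 : Xᴴ * Z = 0) :
    nuclearNorm (X + Z) = nuclearNorm X + nuclearNorm Z :=
  statement14_general X Z h1 h2

end IRLSM
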